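/- The operator A₃ = t²∂_t + tx∂_x + x² + t/2 satisfies the commutation relation [L, A₃] = 2t·L, where L = ∂_t - (1/4)∂_xx + (1/(4t²))∂_pp; consequently A₃ maps solutions of L Q = 0 to solutions. -/

import Mathlib

open Filter Topology

abbrev E3 : Type := ℝ × ℝ × ℝ

def U3 : Set E3 := {v : E3 | 0 < v.2.2}

lemma isOpen_U3 : IsOpen U3 := by
  have : U3 = (fun v : E3 => v.2.2) ⁻¹' (Set.Ioi 0) := rfl
  rw [this]
  exact (isOpen_Ioi).preimage (by fun_prop)

abbrev ee1 : E3 := (1, 0, 0)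
abbrev ee2 : E3 := (0, 1, 0)
abbrev ee3 : E3 := (0, 0, 1)

noncomputable def pd (i : E3) (g : E3 → ℝ) : E3 → ℝ := fun v => fderiv ℝ g v i

lemma pd_contDiffOn {g : E3 → ℝ} (i : E3) (hg : ContDiffOn ℝ (⊤ : ℕ∞) g U3) :
    ContDiffOn ℝ (⊤ : ℕ∞) (pd i g) U3 := by
  have h1 : ContDiffOn ℝ (⊤ : ℕ∞) (fderiv ℝ g) U3 := hg.fderiv_of_isOpen isOpen_U3 (by simp)
  have h2 := (ContinuousLinearMap.apply ℝ ℝ i).contDiff.comp_contDiffOn h1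
  exact h2

lemma differentiableAt_of_cd {g : E3 → ℝ} (hg : ContDiffOn ℝ (⊤ : ℕ∞) g U3) {v : E3}
    (hv : v ∈ U3) : DifferentiableAt ℝ g v :=
  ((hg.differentiableOn (by simp)).differentiableAt (isOpen_U3.mem_nhds hv))

lemma pd_comm {g : E3 → ℝ} (hg : ContDiffOn ℝ (⊤ : ℕ∞) g U3) {v : E3} (hv : v ∈ U3) (i j : E3) :
    pd i (pd j g) v = pd j (pd i g) v := by
  have hfd : ContDiffOn ℝ (⊤ : ℕ∞) (fderiv ℝ g) U3 := hg.fderiv_of_isOpen isOpen_U3 (by simp)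
  have hf : ∀ᶠ y in 𝓝 v, HasFDerivAt g (fderiv ℝ g y) y := by
    filter_upwards [isOpen_U3.mem_nhds hv] with y hy
    exact (differentiableAt_of_cd hg hy).hasFDerivAt
  have hx : HasFDerivAt (fderiv ℝ g) (fderiv ℝ (fderiv ℝ g) v) v :=
    (((hfd.differentiableOn (by simp)).differentiableAt (isOpen_U3.mem_nhds hv))).hasFDerivAt
  have hsym := second_derivative_symmetric_of_eventually hf hx i j
  have key : ∀ k l : E3, pd k (pd l g) v = fderiv ℝ (fderiv ℝ g) v k l := by
    intro k l
    have hc : HasFDerivAt (fun w => fderiv ℝ g w l)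
        ((ContinuousLinearMap.apply ℝ ℝ l).comp (fderiv ℝ (fderiv ℝ g) v)) v :=
      (ContinuousLinearMap.apply ℝ ℝ l).hasFDerivAt.comp v hx
    have : pd l g = fun w => fderiv ℝ g w l := rfl
    rw [show pd k (pd l g) v = fderiv ℝ (fun w => fderiv ℝ g w l) v k from rfl, hc.fderiv]
    rfl
  rw [key i j, key j i]
  exact hsym

lemma hasDerivAt_sectX {g : E3 → ℝ} (hg : ContDiffOn ℝ (⊤ : ℕ∞) g U3) {x p t : ℝ} (ht : 0 < t) :
    HasDerivAt (fun z => g (z, p, t)) (pd ee1 g (x, p, t)) x := by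
  have hline : HasDerivAt (fun z : ℝ => ((z, p, t) : E3)) ((1 : ℝ), (0 : ℝ), (0 : ℝ)) x :=
    HasDerivAt.prodMk (hasDerivAt_id x) (HasDerivAt.prodMk (hasDerivAt_const x p) (hasDerivAt_const x t))
  exact (differentiableAt_of_cd hg ht).hasFDerivAt.comp_hasDerivAt x hline

lemma hasDerivAt_sectP {g : E3 → ℝ} (hg : ContDiffOn ℝ (⊤ : ℕ∞) g U3) {x p t : ℝ} (ht : 0 < t) :
    HasDerivAt (fun z => g (x, z, t)) (pd ee2 g (x, p, t)) p := by
  have hline : HasDerivAt (fun z : ℝ => ((x, z, t) : E3)) ((0 : ℝ), (1 : ℝ), (0 : ℝ)) p :=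
    HasDerivAt.prodMk (hasDerivAt_const p x) (HasDerivAt.prodMk (hasDerivAt_id p) (hasDerivAt_const p t))
  exact (differentiableAt_of_cd hg ht).hasFDerivAt.comp_hasDerivAt p hline

lemma hasDerivAt_sectT {g : E3 → ℝ} (hg : ContDiffOn ℝ (⊤ : ℕ∞) g U3) {x p t : ℝ} (ht : 0 < t) :
    HasDerivAt (fun s => g (x, p, s)) (pd ee3 g (x, p, t)) t := by
  have hline : HasDerivAt (fun s : ℝ => ((x, p, s) : E3)) ((0 : ℝ), (0 : ℝ), (1 : ℝ)) t :=
    HasDerivAt.prodMk (hasDerivAt_const t x) (HasDerivAt.prodMk (hasDerivAt_const t p) (hasDerivAt_id t))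
  exact (differentiableAt_of_cd hg ht).hasFDerivAt.comp_hasDerivAt t hline

lemma pd_congrU {g h : E3 → ℝ} (hgh : ∀ w ∈ U3, g w = h w) {v : E3} (hv : v ∈ U3) (i : E3) :
    pd i g v = pd i h v := by
  have hev : g =ᶠ[nhds v] h := by
    filter_upwards [isOpen_U3.mem_nhds hv] with w hw using hgh w hw
  simp only [pd]
  rw [hev.fderiv_eq]

noncomputable def pdT (Q : ℝ → ℝ → ℝ → ℝ) (x p t : ℝ) : ℝ := deriv (fun s => Q x p s) t
noncomputable def pdX (Q : ℝ → ℝ → ℝ → ℝ) (x p t : ℝ) : ℝ := deriv (fun z => Q z p t) x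
noncomputable def pdP (Q : ℝ → ℝ → ℝ → ℝ) (x p t : ℝ) : ℝ := deriv (fun z => Q x z t) p
noncomputable def pdXX (Q : ℝ → ℝ → ℝ → ℝ) (x p t : ℝ) : ℝ :=
  deriv (fun y => deriv (fun z => Q z p t) y) x
noncomputable def pdPP (Q : ℝ → ℝ → ℝ → ℝ) (x p t : ℝ) : ℝ :=
  deriv (fun y => deriv (fun z => Q x z t) y) p

/-- The pseudo-diffusion operator `L = ∂_t - (1/4)∂_xx + (1/(4t²))∂_pp`. -/
noncomputable def Lop (Q : ℝ → ℝ → ℝ → ℝ) (x p t : ℝ) : ℝ :=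
  pdT Q x p t - (1/4) * pdXX Q x p t + 1/(4*t^2) * pdPP Q x p t

/-- Smoothness on the region `t > 0`. -/
def SmoothPos (Q : ℝ → ℝ → ℝ → ℝ) : Prop :=
  ContDiffOn ℝ (⊤ : ℕ∞) (fun v : ℝ × ℝ × ℝ => Q v.1 v.2.1 v.2.2) {v : ℝ × ℝ × ℝ | 0 < v.2.2}

/-- The operator `A₃ = t²∂_t + tx∂_x + x² + t/2`. -/
noncomputable def A3op (Q : ℝ → ℝ → ℝ → ℝ) : ℝ → ℝ → ℝ → ℝ :=
  fun x p t => t^2 * pdT Q x p t + t*x * pdX Q x p t + (x^2 + t/2) * Q x p t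

noncomputable def Fn (Q : ℝ → ℝ → ℝ → ℝ) : E3 → ℝ := fun v => Q v.1 v.2.1 v.2.2

variable {Q : ℝ → ℝ → ℝ → ℝ}

lemma smooth_Fn (hQ : SmoothPos Q) : ContDiffOn ℝ (⊤ : ℕ∞) (Fn Q) U3 := hQ

lemma hmemU {y q s : ℝ} (hs : 0 < s) : ((y, q, s) : E3) ∈ U3 := hs

lemma eqT (hQ : SmoothPos Q) {y q s : ℝ} (hs : 0 < s) :
    pdT Q y q s = pd ee3 (Fn Q) (y, q, s) := (hasDerivAt_sectT (smooth_Fn hQ) hs).deriv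

lemma eqX (hQ : SmoothPos Q) {y q s : ℝ} (hs : 0 < s) :
    pdX Q y q s = pd ee1 (Fn Q) (y, q, s) := (hasDerivAt_sectX (smooth_Fn hQ) hs).deriv

lemma eqP (hQ : SmoothPos Q) {y q s : ℝ} (hs : 0 < s) :
    pdP Q y q s = pd ee2 (Fn Q) (y, q, s) := (hasDerivAt_sectP (smooth_Fn hQ) hs).deriv

lemma eqXX (hQ : SmoothPos Q) {y q s : ℝ} (hs : 0 < s) :
    pdXX Q y q s = pd ee1 (pd ee1 (Fn Q)) (y, q, s) := by
  have hi : (fun y' => deriv (fun z => Q z q s) y') = (fun y' => pd ee1 (Fn Q) (y', q, s)) :=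
    funext fun y' => (hasDerivAt_sectX (smooth_Fn hQ) hs).deriv
  show deriv (fun y' => deriv (fun z => Q z q s) y') y = _
  rw [hi]
  exact (hasDerivAt_sectX (pd_contDiffOn ee1 (smooth_Fn hQ)) hs).deriv

lemma eqPP (hQ : SmoothPos Q) {y q s : ℝ} (hs : 0 < s) :
    pdPP Q y q s = pd ee2 (pd ee2 (Fn Q)) (y, q, s) := by
  have hi : (fun y' => deriv (fun z => Q y z s) y') = (fun y' => pd ee2 (Fn Q) (y, y', s)) :=
    funext fun y' => (hasDerivAt_sectP (smooth_Fn hQ) hs).deriv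
  show deriv (fun y' => deriv (fun z => Q y z s) y') q = _
  rw [hi]
  exact (hasDerivAt_sectP (pd_contDiffOn ee2 (smooth_Fn hQ)) hs).deriv

lemma eqL (hQ : SmoothPos Q) {y q s : ℝ} (hs : 0 < s) :
    Lop Q y q s = pd ee3 (Fn Q) (y, q, s) - (1/4) * pd ee1 (pd ee1 (Fn Q)) (y, q, s)
      + 1/(4*s^2) * pd ee2 (pd ee2 (Fn Q)) (y, q, s) := by
  unfold Lop
  rw [eqT hQ hs, eqXX hQ hs, eqPP hQ hs]

lemma eqA3 (hQ : SmoothPos Q) {y q s : ℝ} (hs : 0 < s) :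
    A3op Q y q s = s^2 * pd ee3 (Fn Q) (y, q, s) + s*y * pd ee1 (Fn Q) (y, q, s)
      + (y^2 + s/2) * Fn Q (y, q, s) := by
  unfold A3op
  rw [eqT hQ hs, eqX hQ hs]
  rfl

lemma e_pdT_A3 (hQ : SmoothPos Q) {x p t : ℝ} (ht : 0 < t) :
    pdT (A3op Q) x p t =
      t^2 * pd ee3 (pd ee3 (Fn Q)) (x, p, t) + t*x * pd ee3 (pd ee1 (Fn Q)) (x, p, t)
        + (2*t + x^2 + t/2) * pd ee3 (Fn Q) (x, p, t)
        + x * pd ee1 (Fn Q) (x, p, t) + (1/2) * Fn Q (x, p, t) := by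
  have hF := smooth_Fn hQ
  have hF1 := pd_contDiffOn ee1 hF
  have hF3 := pd_contDiffOn ee3 hF
  have hD : HasDerivAt (fun s => s^2 * pd ee3 (Fn Q) (x, p, s) + s*x * pd ee1 (Fn Q) (x, p, s)
      + (x^2 + s/2) * Fn Q (x, p, s))
      (t^2 * pd ee3 (pd ee3 (Fn Q)) (x, p, t) + t*x * pd ee3 (pd ee1 (Fn Q)) (x, p, t)
        + (2*t + x^2 + t/2) * pd ee3 (Fn Q) (x, p, t)
        + x * pd ee1 (Fn Q) (x, p, t) + (1/2) * Fn Q (x, p, t)) t := by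
    have a := (hasDerivAt_pow 2 t).mul (hasDerivAt_sectT hF3 (x := x) (p := p) ht)
    have b := ((hasDerivAt_id t).mul_const x).mul (hasDerivAt_sectT hF1 (x := x) (p := p) ht)
    have c := ((hasDerivAt_const t (x^2)).add ((hasDerivAt_id t).div_const 2)).mul
      (hasDerivAt_sectT hF (x := x) (p := p) ht)
    have h := (a.add b).add c
    refine h.congr_deriv ?_
    simp only [id_eq, Pi.add_apply]
    push_cast
    ring
  have hev : (fun s => A3op Q x p s) =ᶠ[nhds t]
      (fun s => s^2 * pd ee3 (Fn Q) (x, p, s) + s*x * pd ee1 (Fn Q) (x, p, s)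
        + (x^2 + s/2) * Fn Q (x, p, s)) := by
    filter_upwards [eventually_gt_nhds ht] with s hs
    exact eqA3 hQ hs
  show deriv (fun s => A3op Q x p s) t = _
  rw [hev.deriv_eq, hD.deriv]

lemma e_pdXX_A3 (hQ : SmoothPos Q) {x p t : ℝ} (ht : 0 < t) :
    pdXX (A3op Q) x p t =
      t^2 * pd ee1 (pd ee1 (pd ee3 (Fn Q))) (x, p, t)
        + t*x * pd ee1 (pd ee1 (pd ee1 (Fn Q))) (x, p, t)
        + (2*t + x^2 + t/2) * pd ee1 (pd ee1 (Fn Q)) (x, p, t)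
        + 4*x * pd ee1 (Fn Q) (x, p, t) + 2 * Fn Q (x, p, t) := by
  have hF := smooth_Fn hQ
  have hF1 := pd_contDiffOn ee1 hF
  have hF3 := pd_contDiffOn ee3 hF
  have hF11 := pd_contDiffOn ee1 hF1
  have hF13 := pd_contDiffOn ee1 hF3
  have hinner : ∀ y : ℝ, deriv (fun z => A3op Q z p t) y =
      t^2 * pd ee1 (pd ee3 (Fn Q)) (y, p, t)
        + (t * pd ee1 (Fn Q) (y, p, t) + t*y * pd ee1 (pd ee1 (Fn Q)) (y, p, t))
        + (2*y * Fn Q (y, p, t) + (y^2 + t/2) * pd ee1 (Fn Q) (y, p, t)) := by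
    intro y
    have hfun : (fun z => A3op Q z p t) = (fun z => t^2 * pd ee3 (Fn Q) (z, p, t)
        + t*z * pd ee1 (Fn Q) (z, p, t) + (z^2 + t/2) * Fn Q (z, p, t)) :=
      funext fun z => eqA3 hQ ht
    rw [hfun]
    have a := (hasDerivAt_sectX hF3 (x := y) (p := p) ht).const_mul (t^2)
    have b := (((hasDerivAt_id y).const_mul t).mul (hasDerivAt_sectX hF1 (x := y) (p := p) ht))
    have c := ((hasDerivAt_pow 2 y).add_const (t/2)).mul (hasDerivAt_sectX hF (x := y) (p := p) ht)
    have hD : HasDerivAt (fun z => t^2 * pd ee3 (Fn Q) (z, p, t)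
        + t*z * pd ee1 (Fn Q) (z, p, t) + (z^2 + t/2) * Fn Q (z, p, t))
        (t^2 * pd ee1 (pd ee3 (Fn Q)) (y, p, t)
          + (t * pd ee1 (Fn Q) (y, p, t) + t*y * pd ee1 (pd ee1 (Fn Q)) (y, p, t))
          + (2*y * Fn Q (y, p, t) + (y^2 + t/2) * pd ee1 (Fn Q) (y, p, t))) y := by
      refine ((a.add b).add c).congr_deriv ?_
      simp only [id_eq]
      push_cast
      ring
    exact hD.deriv
  have houter : (fun y => deriv (fun z => A3op Q z p t) y) = (fun y =>
      t^2 * pd ee1 (pd ee3 (Fn Q)) (y, p, t)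
        + (t * pd ee1 (Fn Q) (y, p, t) + t*y * pd ee1 (pd ee1 (Fn Q)) (y, p, t))
        + (2*y * Fn Q (y, p, t) + (y^2 + t/2) * pd ee1 (Fn Q) (y, p, t))) := funext hinner
  show deriv (fun y => deriv (fun z => A3op Q z p t) y) x = _
  rw [houter]
  have a := (hasDerivAt_sectX hF13 (x := x) (p := p) ht).const_mul (t^2)
  have b := ((hasDerivAt_sectX hF1 (x := x) (p := p) ht).const_mul t).add
    (((hasDerivAt_id x).const_mul t).mul (hasDerivAt_sectX hF11 (x := x) (p := p) ht))
  have c := (((hasDerivAt_id x).const_mul 2).mul (hasDerivAt_sectX hF (x := x) (p := p) ht)).add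
    (((hasDerivAt_pow 2 x).add_const (t/2)).mul (hasDerivAt_sectX hF1 (x := x) (p := p) ht))
  have hD : HasDerivAt (fun y =>
      t^2 * pd ee1 (pd ee3 (Fn Q)) (y, p, t)
        + (t * pd ee1 (Fn Q) (y, p, t) + t*y * pd ee1 (pd ee1 (Fn Q)) (y, p, t))
        + (2*y * Fn Q (y, p, t) + (y^2 + t/2) * pd ee1 (Fn Q) (y, p, t)))
      (t^2 * pd ee1 (pd ee1 (pd ee3 (Fn Q))) (x, p, t)
        + t*x * pd ee1 (pd ee1 (pd ee1 (Fn Q))) (x, p, t)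
        + (2*t + x^2 + t/2) * pd ee1 (pd ee1 (Fn Q)) (x, p, t)
        + 4*x * pd ee1 (Fn Q) (x, p, t) + 2 * Fn Q (x, p, t)) x := by
    refine ((a.add b).add c).congr_deriv ?_
    simp only [id_eq]
    push_cast
    ring
  exact hD.deriv

lemma e_pdPP_A3 (hQ : SmoothPos Q) {x p t : ℝ} (ht : 0 < t) :
    pdPP (A3op Q) x p t =
      t^2 * pd ee2 (pd ee2 (pd ee3 (Fn Q))) (x, p, t)
        + t*x * pd ee2 (pd ee2 (pd ee1 (Fn Q))) (x, p, t)
        + (x^2 + t/2) * pd ee2 (pd ee2 (Fn Q)) (x, p, t) := by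
  have hF := smooth_Fn hQ
  have hF1 := pd_contDiffOn ee1 hF
  have hF3 := pd_contDiffOn ee3 hF
  have hF2 := pd_contDiffOn ee2 hF
  have hF21 := pd_contDiffOn ee2 hF1
  have hF23 := pd_contDiffOn ee2 hF3
  have hinner : ∀ y : ℝ, deriv (fun z => A3op Q x z t) y =
      t^2 * pd ee2 (pd ee3 (Fn Q)) (x, y, t)
        + t*x * pd ee2 (pd ee1 (Fn Q)) (x, y, t)
        + (x^2 + t/2) * pd ee2 (Fn Q) (x, y, t) := by
    intro y
    have hfun : (fun z => A3op Q x z t) = (fun z => t^2 * pd ee3 (Fn Q) (x, z, t)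
        + t*x * pd ee1 (Fn Q) (x, z, t) + (x^2 + t/2) * Fn Q (x, z, t)) :=
      funext fun z => eqA3 hQ ht
    rw [hfun]
    have a := (hasDerivAt_sectP hF3 (x := x) (p := y) ht).const_mul (t^2)
    have b := (hasDerivAt_sectP hF1 (x := x) (p := y) ht).const_mul (t*x)
    have c := (hasDerivAt_sectP hF (x := x) (p := y) ht).const_mul (x^2 + t/2)
    exact ((a.add b).add c).deriv
  have houter : (fun y => deriv (fun z => A3op Q x z t) y) = (fun y =>
      t^2 * pd ee2 (pd ee3 (Fn Q)) (x, y, t)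
        + t*x * pd ee2 (pd ee1 (Fn Q)) (x, y, t)
        + (x^2 + t/2) * pd ee2 (Fn Q) (x, y, t)) := funext hinner
  show deriv (fun y => deriv (fun z => A3op Q x z t) y) p = _
  rw [houter]
  have a := (hasDerivAt_sectP hF23 (x := x) (p := p) ht).const_mul (t^2)
  have b := (hasDerivAt_sectP hF21 (x := x) (p := p) ht).const_mul (t*x)
  have c := (hasDerivAt_sectP hF2 (x := x) (p := p) ht).const_mul (x^2 + t/2)
  exact ((a.add b).add c).deriv

lemma e_pdT_L (hQ : SmoothPos Q) {x p t : ℝ} (ht : 0 < t) :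
    pdT (fun a b c => Lop Q a b c) x p t =
      pd ee3 (pd ee3 (Fn Q)) (x, p, t)
        - (1/4) * pd ee3 (pd ee1 (pd ee1 (Fn Q))) (x, p, t)
        - (1/(2*t^3)) * pd ee2 (pd ee2 (Fn Q)) (x, p, t)
        + (1/(4*t^2)) * pd ee3 (pd ee2 (pd ee2 (Fn Q))) (x, p, t) := by
  have hF := smooth_Fn hQ
  have hF3 := pd_contDiffOn ee3 hF
  have hF11 := pd_contDiffOn ee1 (pd_contDiffOn ee1 hF)
  have hF22 := pd_contDiffOn ee2 (pd_contDiffOn ee2 hF)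
  have ht' : t ≠ 0 := ne_of_gt ht
  have hc0 : HasDerivAt (fun s : ℝ => 1/(4*s^2)) (-(1/(2*t^3))) t := by
    have h := ((hasDerivAt_pow 2 t).const_mul (4:ℝ)).inv (by positivity)
    refine (h.congr_of_eventuallyEq (Filter.Eventually.of_forall fun s => by simp [one_div])).congr_deriv ?_
    · field_simp
      ring
  have a := hasDerivAt_sectT hF3 (x := x) (p := p) ht
  have b := (hasDerivAt_sectT hF11 (x := x) (p := p) ht).const_mul (1/4 : ℝ)
  have c := hc0.mul (hasDerivAt_sectT hF22 (x := x) (p := p) ht)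
  have hD : HasDerivAt (fun s => pd ee3 (Fn Q) (x, p, s)
      - (1/4) * pd ee1 (pd ee1 (Fn Q)) (x, p, s)
      + 1/(4*s^2) * pd ee2 (pd ee2 (Fn Q)) (x, p, s))
      (pd ee3 (pd ee3 (Fn Q)) (x, p, t)
        - (1/4) * pd ee3 (pd ee1 (pd ee1 (Fn Q))) (x, p, t)
        - (1/(2*t^3)) * pd ee2 (pd ee2 (Fn Q)) (x, p, t)
        + (1/(4*t^2)) * pd ee3 (pd ee2 (pd ee2 (Fn Q))) (x, p, t)) t := by
    refine ((a.sub b).add c).congr_deriv ?_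
    ring
  have hev : (fun s => Lop Q x p s) =ᶠ[nhds t]
      (fun s => pd ee3 (Fn Q) (x, p, s)
        - (1/4) * pd ee1 (pd ee1 (Fn Q)) (x, p, s)
        + 1/(4*s^2) * pd ee2 (pd ee2 (Fn Q)) (x, p, s)) := by
    filter_upwards [eventually_gt_nhds ht] with s hs
    exact eqL hQ hs
  show deriv (fun s => Lop Q x p s) t = _
  rw [hev.deriv_eq, hD.deriv]

lemma e_pdX_L (hQ : SmoothPos Q) {x p t : ℝ} (ht : 0 < t) :
    pdX (fun a b c => Lop Q a b c) x p t =
      pd ee1 (pd ee3 (Fn Q)) (x, p, t)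
        - (1/4) * pd ee1 (pd ee1 (pd ee1 (Fn Q))) (x, p, t)
        + (1/(4*t^2)) * pd ee1 (pd ee2 (pd ee2 (Fn Q))) (x, p, t) := by
  have hF := smooth_Fn hQ
  have hF3 := pd_contDiffOn ee3 hF
  have hF11 := pd_contDiffOn ee1 (pd_contDiffOn ee1 hF)
  have hF22 := pd_contDiffOn ee2 (pd_contDiffOn ee2 hF)
  have hfun : (fun z => Lop Q z p t) = (fun z => pd ee3 (Fn Q) (z, p, t)
      - (1/4) * pd ee1 (pd ee1 (Fn Q)) (z, p, t)
      + 1/(4*t^2) * pd ee2 (pd ee2 (Fn Q)) (z, p, t)) := funext fun z => eqL hQ ht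
  have a := hasDerivAt_sectX hF3 (x := x) (p := p) ht
  have b := (hasDerivAt_sectX hF11 (x := x) (p := p) ht).const_mul (1/4 : ℝ)
  have c := (hasDerivAt_sectX hF22 (x := x) (p := p) ht).const_mul (1/(4*t^2) : ℝ)
  have hD : HasDerivAt (fun z => pd ee3 (Fn Q) (z, p, t)
      - (1/4) * pd ee1 (pd ee1 (Fn Q)) (z, p, t)
      + 1/(4*t^2) * pd ee2 (pd ee2 (Fn Q)) (z, p, t))
      (pd ee1 (pd ee3 (Fn Q)) (x, p, t)
        - (1/4) * pd ee1 (pd ee1 (pd ee1 (Fn Q))) (x, p, t)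
        + (1/(4*t^2)) * pd ee1 (pd ee2 (pd ee2 (Fn Q))) (x, p, t)) x := by
    exact (a.sub b).add c
  show deriv (fun z => Lop Q z p t) x = _
  rw [hfun, hD.deriv]

lemma symm31 (hQ : SmoothPos Q) {x p t : ℝ} (ht : 0 < t) :
    pd ee3 (pd ee1 (Fn Q)) (x, p, t) = pd ee1 (pd ee3 (Fn Q)) (x, p, t) :=
  pd_comm (smooth_Fn hQ) (hmemU ht) ee3 ee1

lemma symm311 (hQ : SmoothPos Q) {x p t : ℝ} (ht : 0 < t) :
    pd ee3 (pd ee1 (pd ee1 (Fn Q))) (x, p, t) = pd ee1 (pd ee1 (pd ee3 (Fn Q))) (x, p, t) := by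
  have h1 : pd ee3 (pd ee1 (pd ee1 (Fn Q))) (x, p, t)
      = pd ee1 (pd ee3 (pd ee1 (Fn Q))) (x, p, t) :=
    pd_comm (pd_contDiffOn ee1 (smooth_Fn hQ)) (hmemU ht) ee3 ee1
  have h2 : pd ee1 (pd ee3 (pd ee1 (Fn Q))) (x, p, t)
      = pd ee1 (pd ee1 (pd ee3 (Fn Q))) (x, p, t) :=
    pd_congrU (fun w hw => pd_comm (smooth_Fn hQ) hw ee3 ee1) (hmemU ht) ee1
  rw [h1, h2]

lemma symm223 (hQ : SmoothPos Q) {x p t : ℝ} (ht : 0 < t) :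
    pd ee2 (pd ee2 (pd ee3 (Fn Q))) (x, p, t) = pd ee3 (pd ee2 (pd ee2 (Fn Q))) (x, p, t) := by
  have h1 : pd ee2 (pd ee2 (pd ee3 (Fn Q))) (x, p, t)
      = pd ee2 (pd ee3 (pd ee2 (Fn Q))) (x, p, t) :=
    pd_congrU (fun w hw => pd_comm (smooth_Fn hQ) hw ee2 ee3) (hmemU ht) ee2
  have h2 : pd ee2 (pd ee3 (pd ee2 (Fn Q))) (x, p, t)
      = pd ee3 (pd ee2 (pd ee2 (Fn Q))) (x, p, t) :=
    pd_comm (pd_contDiffOn ee2 (smooth_Fn hQ)) (hmemU ht) ee2 ee3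
  rw [h1, h2]

lemma symm221 (hQ : SmoothPos Q) {x p t : ℝ} (ht : 0 < t) :
    pd ee2 (pd ee2 (pd ee1 (Fn Q))) (x, p, t) = pd ee1 (pd ee2 (pd ee2 (Fn Q))) (x, p, t) := by
  have h1 : pd ee2 (pd ee2 (pd ee1 (Fn Q))) (x, p, t)
      = pd ee2 (pd ee1 (pd ee2 (Fn Q))) (x, p, t) :=
    pd_congrU (fun w hw => pd_comm (smooth_Fn hQ) hw ee2 ee1) (hmemU ht) ee2
  have h2 : pd ee2 (pd ee1 (pd ee2 (Fn Q))) (x, p, t)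
      = pd ee1 (pd ee2 (pd ee2 (Fn Q))) (x, p, t) :=
    pd_comm (pd_contDiffOn ee2 (smooth_Fn hQ)) (hmemU ht) ee2 ee1
  rw [h1, h2]

lemma key_commutation (hQ : SmoothPos Q) (x p t : ℝ) (ht : 0 < t) :
    Lop (A3op Q) x p t = A3op (fun a b c => Lop Q a b c) x p t + 2*t * Lop Q x p t := by
  have ht' : t ≠ 0 := ne_of_gt ht
  have expand1 : Lop (A3op Q) x p t = pdT (A3op Q) x p t - (1/4) * pdXX (A3op Q) x p t
      + 1/(4*t^2) * pdPP (A3op Q) x p t := rfl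
  have expand2 : A3op (fun a b c => Lop Q a b c) x p t
      = t^2 * pdT (fun a b c => Lop Q a b c) x p t
        + t*x * pdX (fun a b c => Lop Q a b c) x p t
        + (x^2 + t/2) * Lop Q x p t := rfl
  rw [expand1, expand2, e_pdT_A3 hQ ht, e_pdXX_A3 hQ ht, e_pdPP_A3 hQ ht,
    e_pdT_L hQ ht, e_pdX_L hQ ht, eqL hQ ht,
    symm31 hQ ht, symm311 hQ ht, symm223 hQ ht, symm221 hQ ht]
  field_simp
  ring

/-- `[L, A₃] = 2t·L` on smooth functions; consequently `A₃` maps solutions to solutions. -/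
theorem stmt7 (Q : ℝ → ℝ → ℝ → ℝ) (hQ : SmoothPos Q) :
    (∀ x p t : ℝ, 0 < t →
      Lop (A3op Q) x p t - A3op (fun a b c => Lop Q a b c) x p t = 2*t * Lop Q x p t) ∧
    ((∀ x p t : ℝ, 0 < t → Lop Q x p t = 0) →
      ∀ x p t : ℝ, 0 < t → Lop (A3op Q) x p t = 0) := by
  constructor
  · intro x p t ht
    have := key_commutation hQ x p t ht
    linarith
  · intro hsol x p t ht
    have hkey := key_commutation hQ x p t ht
    have hpdT : pdT (fun a b c => Lop Q a b c) x p t = 0 := by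
      have hev : (fun s => Lop Q x p s) =ᶠ[nhds t] (fun _ => (0:ℝ)) := by
        filter_upwards [eventually_gt_nhds ht] with s hs
        exact hsol x p s hs
      show deriv (fun s => Lop Q x p s) t = 0
      rw [hev.deriv_eq, deriv_const]
    have hpdX : pdX (fun a b c => Lop Q a b c) x p t = 0 := by
      have hfun : (fun z => Lop Q z p t) = (fun _ => (0:ℝ)) :=
        funext fun z => hsol z p t ht
      show deriv (fun z => Lop Q z p t) x = 0
      rw [hfun, deriv_const]
    have hA3 : A3op (fun a b c => Lop Q a b c) x p t = 0 := by
      show t^2 * pdT (fun a b c => Lop Q a b c) x p t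
        + t*x * pdX (fun a b c => Lop Q a b c) x p t
        + (x^2 + t/2) * Lop Q x p t = 0
      rw [hpdT, hpdX, hsol x p t ht]
      ring
    rw [hkey, hA3, hsol x p t ht]
    ring
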